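/- Let f_ij (i,j = 1,2,3, symmetric) be smooth functions on an open subset of R³ satisfying ∂_(k f_ij) = φ_(k f_ij) for some covector field φ (complete symmetrization over i,j,k). Suppose in addition a,b,c,λ,μ are constants and set a(p) = f₁₁ + 2λf₁₃ + λ²f₃₃, b(p) = f₁₂ + λf₂₃ + μf₁₃ + λμf₃₃, c(p) = f₂₂ + 2μf₂₃ + μ²f₃₃, viewed as functions of (q¹,q²) via p = (q¹+α, q²+β, λq¹+μq²+γ). Then (a,b,c) satisfies the 2D linear degeneracy relations ∂₁a = ψ₁a, ∂₂c = ψ₂c, ∂₂a + 2∂₁b = ψ₂a + 2ψ₁b, ∂₁c + 2∂₂b = ψ₁c + 2ψ₂b, where ψ₁ = φ₁ + λφ₃ and ψ₂ = φ₂ + μφ₃ (φ evaluated at p), and ∂₁, ∂₂ denote derivatives in q¹, q². -/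

import Mathlib

/-- Partial derivative in the `i`-th coordinate direction. -/
noncomputable def pd {n : ℕ} (i : Fin n) (f : (Fin n → ℝ) → ℝ) (x : Fin n → ℝ) : ℝ :=
  fderiv ℝ f x (Pi.single i 1)

noncomputable def LDe0 : (Fin 2 → ℝ) →L[ℝ] ℝ := ContinuousLinearMap.proj 0
noncomputable def LDe1 : (Fin 2 → ℝ) →L[ℝ] ℝ := ContinuousLinearMap.proj 1
noncomputable def LDmap (lam mu : ℝ) : (Fin 2 → ℝ) →L[ℝ] (Fin 3 → ℝ) :=
  ContinuousLinearMap.pi ![LDe0, LDe1, lam • LDe0 + mu • LDe1]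

lemma LDmap_hasFDerivAt (α β γ lam mu : ℝ) (q : Fin 2 → ℝ) :
    HasFDerivAt (fun q : Fin 2 → ℝ => (![q 0 + α, q 1 + β, lam * q 0 + mu * q 1 + γ] : Fin 3 → ℝ))
      (LDmap lam mu) q := by
  have : (fun q : Fin 2 → ℝ => (![q 0 + α, q 1 + β, lam * q 0 + mu * q 1 + γ] : Fin 3 → ℝ))
      = fun q => LDmap lam mu q + ![α, β, γ] := by
    funext q i
    fin_cases i <;> simp [LDmap, LDe0, LDe1, ContinuousLinearMap.pi_apply]
  rw [this]
  exact (ContinuousLinearMap.hasFDerivAt _).add_const _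

lemma LDmap_single0 (lam mu : ℝ) :
    LDmap lam mu (Pi.single 0 1) = (Pi.single 0 1 : Fin 3 → ℝ) + lam • (Pi.single 2 1 : Fin 3 → ℝ) := by
  funext i
  fin_cases i <;> simp [LDmap, LDe0, LDe1, ContinuousLinearMap.pi_apply, Pi.single_apply]

lemma LDmap_single1 (lam mu : ℝ) :
    LDmap lam mu (Pi.single 1 1) = (Pi.single 1 1 : Fin 3 → ℝ) + mu • (Pi.single 2 1 : Fin 3 → ℝ) := by
  funext i
  fin_cases i <;> simp [LDmap, LDe0, LDe1, ContinuousLinearMap.pi_apply, Pi.single_apply]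

/-- If the symmetric family `f_ij` satisfies the 3D symmetrized linear degeneracy
condition `∂_(k f_ij) = φ_(k f_ij)` on an open set `s`, then the travelling-wave
coefficients `a = f₁₁ + 2λf₁₃ + λ²f₃₃`, `b = f₁₂ + λf₂₃ + μf₁₃ + λμf₃₃`,
`c = f₂₂ + 2μf₂₃ + μ²f₃₃`, viewed as functions of `(q¹,q²)` via
`p = (q¹+α, q²+β, λq¹+μq²+γ)`, satisfy the 2D linear degeneracy relations with
`ψ₁ = φ₁ + λφ₃`, `ψ₂ = φ₂ + μφ₃`. -/
theorem symmetrized_condition_descends_to_reductions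
    (s : Set (Fin 3 → ℝ)) (hs : IsOpen s)
    (f : Fin 3 → Fin 3 → (Fin 3 → ℝ) → ℝ)
    (φ : Fin 3 → (Fin 3 → ℝ) → ℝ)
    (hfsymm : ∀ i j, f i j = f j i)
    (hf : ∀ i j, ContDiffOn ℝ (⊤ : ℕ∞) (f i j) s)
    (hsym : ∀ (i j k : Fin 3), ∀ p ∈ s,
      pd k (f i j) p + pd i (f j k) p + pd j (f k i) p
        = φ k p * f i j p + φ i p * f j k p + φ j p * f k i p)
    (α β γ lam mu : ℝ)
    (P : (Fin 2 → ℝ) → (Fin 3 → ℝ))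
    (hP : P = fun q => ![q 0 + α, q 1 + β, lam * q 0 + mu * q 1 + γ])
    (a b c ψ₁ ψ₂ : (Fin 2 → ℝ) → ℝ)
    (ha : a = fun q => f 0 0 (P q) + 2 * lam * f 0 2 (P q) + lam ^ 2 * f 2 2 (P q))
    (hb : b = fun q => f 0 1 (P q) + lam * f 1 2 (P q) + mu * f 0 2 (P q)
      + lam * mu * f 2 2 (P q))
    (hc : c = fun q => f 1 1 (P q) + 2 * mu * f 1 2 (P q) + mu ^ 2 * f 2 2 (P q))
    (hψ₁ : ψ₁ = fun q => φ 0 (P q) + lam * φ 2 (P q))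
    (hψ₂ : ψ₂ = fun q => φ 1 (P q) + mu * φ 2 (P q)) :
    ∀ q : Fin 2 → ℝ, P q ∈ s →
      pd 0 a q = ψ₁ q * a q ∧
      pd 1 c q = ψ₂ q * c q ∧
      pd 1 a q + 2 * pd 0 b q = ψ₂ q * a q + 2 * ψ₁ q * b q ∧
      pd 0 c q + 2 * pd 1 b q = ψ₁ q * c q + 2 * ψ₂ q * b q := by
  intro q hq
  have hd : ∀ i j : Fin 3, DifferentiableAt ℝ (f i j) (P q) := fun i j =>
    ((hf i j).contDiffAt (hs.mem_nhds hq)).differentiableAt (by simp)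
  have hPL : HasFDerivAt P (LDmap lam mu) q := by
    rw [hP]; exact LDmap_hasFDerivAt α β γ lam mu q
  set p := P q with hp
  set D : Fin 3 → Fin 3 → (Fin 3 → ℝ) →L[ℝ] ℝ := fun i j => fderiv ℝ (f i j) p with hD
  have hcomp : ∀ i j : Fin 3, HasFDerivAt (fun q' => f i j (P q'))
      ((D i j).comp (LDmap lam mu)) q := fun i j =>
    ((hd i j).hasFDerivAt).comp q hPL
  -- expansion of directional evaluations
  have exp0 : ∀ i j : Fin 3, (D i j) (LDmap lam mu (Pi.single 0 1))
      = pd 0 (f i j) p + lam * pd 2 (f i j) p := by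
    intro i j
    rw [LDmap_single0, map_add, map_smul, smul_eq_mul]
    rfl
  have exp1 : ∀ i j : Fin 3, (D i j) (LDmap lam mu (Pi.single 1 1))
      = pd 1 (f i j) p + mu * pd 2 (f i j) p := by
    intro i j
    rw [LDmap_single1, map_add, map_smul, smul_eq_mul]
    rfl
  -- derivatives of a, b, c
  have hA : HasFDerivAt a ((D 0 0).comp (LDmap lam mu)
      + (2 * lam) • (D 0 2).comp (LDmap lam mu)
      + (lam ^ 2) • (D 2 2).comp (LDmap lam mu)) q := by
    rw [ha]
    exact ((hcomp 0 0).add ((hcomp 0 2).const_mul (2 * lam))).add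
      ((hcomp 2 2).const_mul (lam ^ 2))
  have hB : HasFDerivAt b ((D 0 1).comp (LDmap lam mu)
      + lam • (D 1 2).comp (LDmap lam mu)
      + mu • (D 0 2).comp (LDmap lam mu)
      + (lam * mu) • (D 2 2).comp (LDmap lam mu)) q := by
    rw [hb]
    exact (((hcomp 0 1).add ((hcomp 1 2).const_mul lam)).add
      ((hcomp 0 2).const_mul mu)).add ((hcomp 2 2).const_mul (lam * mu))
  have hC : HasFDerivAt c ((D 1 1).comp (LDmap lam mu)
      + (2 * mu) • (D 1 2).comp (LDmap lam mu)
      + (mu ^ 2) • (D 2 2).comp (LDmap lam mu)) q := by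
    rw [hc]
    exact ((hcomp 1 1).add ((hcomp 1 2).const_mul (2 * mu))).add
      ((hcomp 2 2).const_mul (mu ^ 2))
  have pdA : ∀ k : Fin 2, pd k a q
      = (D 0 0) (LDmap lam mu (Pi.single k 1)) + 2 * lam * (D 0 2) (LDmap lam mu (Pi.single k 1))
        + lam ^ 2 * (D 2 2) (LDmap lam mu (Pi.single k 1)) := by
    intro k
    rw [pd, hA.fderiv]
    simp [smul_eq_mul]
  have pdB : ∀ k : Fin 2, pd k b q
      = (D 0 1) (LDmap lam mu (Pi.single k 1)) + lam * (D 1 2) (LDmap lam mu (Pi.single k 1))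
        + mu * (D 0 2) (LDmap lam mu (Pi.single k 1))
        + lam * mu * (D 2 2) (LDmap lam mu (Pi.single k 1)) := by
    intro k
    rw [pd, hB.fderiv]
    simp [smul_eq_mul]
  have pdC : ∀ k : Fin 2, pd k c q
      = (D 1 1) (LDmap lam mu (Pi.single k 1)) + 2 * mu * (D 1 2) (LDmap lam mu (Pi.single k 1))
        + mu ^ 2 * (D 2 2) (LDmap lam mu (Pi.single k 1)) := by
    intro k
    rw [pd, hC.fderiv]
    simp [smul_eq_mul]
  -- symmetry normalization
  have s10 : f 1 0 = f 0 1 := hfsymm 1 0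
  have s20 : f 2 0 = f 0 2 := hfsymm 2 0
  have s21 : f 2 1 = f 1 2 := hfsymm 2 1
  have E000 := hsym 0 0 0 p hq
  have E001 := hsym 0 0 1 p hq
  have E002 := hsym 0 0 2 p hq
  have E011 := hsym 0 1 1 p hq
  have E012 := hsym 0 1 2 p hq
  have E022 := hsym 0 2 2 p hq
  have E111 := hsym 1 1 1 p hq
  have E112 := hsym 1 1 2 p hq
  have E122 := hsym 1 2 2 p hq
  have E222 := hsym 2 2 2 p hq
  simp only [s10, s20, s21] at E000 E001 E002 E011 E012 E022 E111 E112 E122 E222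
  have hav : a q = f 0 0 p + 2 * lam * f 0 2 p + lam ^ 2 * f 2 2 p := by rw [ha]
  have hbv : b q = f 0 1 p + lam * f 1 2 p + mu * f 0 2 p + lam * mu * f 2 2 p := by rw [hb]
  have hcv : c q = f 1 1 p + 2 * mu * f 1 2 p + mu ^ 2 * f 2 2 p := by rw [hc]
  have hψ₁v : ψ₁ q = φ 0 p + lam * φ 2 p := by rw [hψ₁]
  have hψ₂v : ψ₂ q = φ 1 p + mu * φ 2 p := by rw [hψ₂]
  refine ⟨?_, ?_, ?_, ?_⟩
  · rw [pdA 0, exp0, exp0, exp0, hψ₁v, hav]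
    linear_combination (1/3) * E000 + lam * E002 + lam ^ 2 * E022 + (lam ^ 3 / 3) * E222
  · rw [pdC 1, exp1, exp1, exp1, hψ₂v, hcv]
    linear_combination (1/3) * E111 + mu * E112 + mu ^ 2 * E122 + (mu ^ 3 / 3) * E222
  · rw [pdA 1, pdB 0, exp1, exp1, exp1, exp0, exp0, exp0, exp0, hψ₁v, hψ₂v, hav, hbv]
    linear_combination E001 + 2 * lam * E012 + lam ^ 2 * E122 + mu * E002
      + 2 * lam * mu * E022 + lam ^ 2 * mu * E222
  · rw [pdC 0, pdB 1, exp0, exp0, exp0, exp1, exp1, exp1, exp1, hψ₁v, hψ₂v, hcv, hbv]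
    linear_combination E011 + 2 * mu * E012 + mu ^ 2 * E022 + lam * E112
      + 2 * lam * mu * E122 + lam * mu ^ 2 * E222
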